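/- arXiv:2512.24541 — 2 statements merged into one kernel-verified Lean document; each statement's English description precedes it below -/
import Mathlib

section
/- Define the bilinear form ⟨·,·⟩_M on the spherical module M(J) ≅ b_{w_J}H by ⟨h₁, h₂⟩_M := (v^{−d_J}/π(J))·ε(i(h₁)·h₂), where d_J = ℓ(w_J), π(J) is the Hilbert polynomial, ε the standard trace, and i the standard anti-involution. Then the standard basis {m_x : x ∈ ᴶW} of M(J) is orthonormal: ⟨m_x, m_y⟩_M = 1 if x = y and 0 otherwise. -/
/-!
Write `b = b_{w_J}`. Since `i(b) = b` and `b² = π(J) b`, the pairing `ε(i(b δ_x) · b δ_y)` equals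
`π(J) · ε(δ_{x⁻¹} · b δ_y)`. For `y` minimal in `W_J y` lengths add, so
`b δ_y = ∑_{u ∈ W_J} v^{d_J - ℓ(u)} δ_{uy}`, and `ε(δ_a δ_b) = [ab = 1]` keeps only the term
`u = 1`, which survives iff `x = y`. Finally `π(J) = ∑_{u ∈ W_J} v^{d_J - 2ℓ(u)}` because
`ℓ(w_J u) = d_J - ℓ(u)`.

Both facts about lengths come from counting right inversions. Tits' action of `W` on
`R × {±1}` shows that the parity of the number of occurrences of a reflection `t` in the right
inversion sequence of a word depends only on the product of the word. Hence the right inversion set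
`N(w)` has `ℓ(w)` elements and `N(w₁w₂) = N(w₂) ∆ w₂⁻¹ N(w₁) w₂`; moreover every inversion of an
element of `W_J` lies in `W_J`.
-/

open LaurentPolynomial
open scoped Classical symmDiff

theorem mul_mul_eq_iff_eq_inv_mul_mul {G : Type*} [Group G] (a w b c : G) :
    a * w * b = c ↔ w = a⁻¹ * c * b⁻¹ := by
  constructor <;> rintro rfl <;> group

namespace CoxeterSystem

variable {B W : Type*} [Group W] {M : CoxeterMatrix B} (cs : CoxeterSystem M W)

local prefix:100 "σ" => cs.simple
local prefix:100 "π" => cs.wordProd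
local prefix:100 "ℓ" => cs.length

variable {J : Set B}

local notation "W_J" => Subgroup.closure (cs.simple '' J)

-- Tits' action of `s_i` on signed reflections `R × {±1}`, extended to all of `W × ZMod 2`.
noncomputable def titsPerm (i : B) : Equiv.Perm (W × ZMod 2) :=
  Function.Involutive.toPerm (fun p => (σ i * p.1 * σ i, p.2 + if p.1 = σ i then 1 else 0)) <| by
    rintro ⟨w, e⟩
    have hfix : σ i * w * σ i = σ i ↔ w = σ i := by
      rw [mul_mul_eq_iff_eq_inv_mul_mul, inv_simple, simple_mul_simple_self, one_mul]
    simp only [hfix, ← mul_assoc, simple_mul_simple_self, one_mul]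
    simp only [mul_assoc, simple_mul_simple_self, mul_one, add_assoc, CharTwo.add_self_eq_zero,
      add_zero]

theorem titsPerm_apply (i : B) (w : W) (e : ZMod 2) :
    cs.titsPerm i (w, e) = (σ i * w * σ i, e + if w = σ i then 1 else 0) :=
  rfl

theorem titsPerm_mul_titsPerm_pow_apply (i j : B) (k : ℕ) (w : W) (e : ZMod 2) :
    ((cs.titsPerm i * cs.titsPerm j) ^ k) (w, e) =
      (((σ j * σ i) ^ k)⁻¹ * w * (σ j * σ i) ^ k,
        e + ∑ r ∈ Finset.range (2 * k), if w = (σ j * σ i) ^ r * σ j then 1 else 0) := by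
  set u := σ j * σ i with hu
  have hinv : u⁻¹ = σ i * σ j := by simp [hu]
  have hσ : σ j * u⁻¹ = u * σ j := by simp [hu, mul_assoc]
  clear_value u
  have hstep : ∀ w e, (cs.titsPerm i * cs.titsPerm j) (w, e) = (u⁻¹ * w * u,
      e + ((if w = u ^ 0 * σ j then 1 else 0) + if w = u ^ 1 * σ j then 1 else 0)) := by
    intro w e
    rw [Equiv.Perm.mul_apply, titsPerm_apply, titsPerm_apply, mul_mul_eq_iff_eq_inv_mul_mul (σ j),
      inv_simple, hinv, hu]
    simp only [pow_zero, one_mul, pow_one, mul_assoc, add_assoc]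
  induction k generalizing w e with
  | zero => simp
  | succ k ih =>
    rw [pow_succ, Equiv.Perm.mul_apply, hstep, ih, Prod.mk.injEq]
    refine ⟨by group, ?_⟩
    have hshift : ∀ r, u⁻¹ * w * u = u ^ r * σ j ↔ w = u ^ (r + 2) * σ j := by
      intro r
      have hconj : u * (u ^ r * σ j) * u⁻¹ = u ^ (r + 2) * σ j :=
        calc u * (u ^ r * σ j) * u⁻¹ = u ^ (r + 1) * (σ j * u⁻¹) := by group
          _ = u ^ (r + 2) * σ j := by rw [hσ]; group
      rw [mul_mul_eq_iff_eq_inv_mul_mul, inv_inv, hconj]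
    rw [show 2 * (k + 1) = 2 * k + 1 + 1 by ring, Finset.sum_range_succ', Finset.sum_range_succ']
    simp only [hshift]
    ring

theorem isLiftable_titsPerm : M.IsLiftable cs.titsPerm := by
  intro i j
  ext ⟨w, e⟩ : 1
  -- `r ↦ (s_j s_i) ^ r * s_j` has period `M i j`, so each term of the sum occurs twice
  rw [titsPerm_mul_titsPerm_pow_apply, simple_mul_simple_pow', inv_one, one_mul, mul_one, two_mul,
    Finset.sum_range_add]
  simp only [pow_add, simple_mul_simple_pow', one_mul, CharTwo.add_self_eq_zero, add_zero,
    Equiv.Perm.one_apply]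

noncomputable def titsRep : W →* Equiv.Perm (W × ZMod 2) :=
  cs.lift ⟨cs.titsPerm, cs.isLiftable_titsPerm⟩

theorem titsRep_simple (i : B) : cs.titsRep (σ i) = cs.titsPerm i :=
  cs.lift_apply_simple cs.isLiftable_titsPerm i

theorem titsRep_wordProd_apply (ω : List B) (t : W) (e : ZMod 2) :
    cs.titsRep (π ω) (t, e) =
      (π ω * t * (π ω)⁻¹, e + ((cs.rightInvSeq ω).count t : ZMod 2)) := by
  induction ω generalizing e with
  | nil => simp
  | cons i ω ih =>
    rw [wordProd_cons, map_mul, Equiv.Perm.mul_apply, ih, titsRep_simple, titsPerm_apply,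
      rightInvSeq, List.count_cons, mul_mul_eq_iff_eq_inv_mul_mul, inv_inv, Prod.mk.injEq]
    refine ⟨by simp only [mul_inv_rev, inv_simple, mul_assoc], ?_⟩
    simp only [beq_iff_eq, eq_comm (b := t), Nat.cast_add, Nat.cast_ite, Nat.cast_one,
      Nat.cast_zero, add_assoc]

noncomputable def invParity (w t : W) : ZMod 2 :=
  (cs.titsRep w (t, 0)).2

theorem titsRep_apply (w t : W) (e : ZMod 2) :
    cs.titsRep w (t, e) = (w * t * w⁻¹, e + cs.invParity w t) := by
  obtain ⟨ω, rfl⟩ := cs.wordProd_surjective w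
  simp [invParity, titsRep_wordProd_apply]

theorem invParity_wordProd (ω : List B) (t : W) :
    cs.invParity (π ω) t = (cs.rightInvSeq ω).count t := by
  simp [invParity, titsRep_wordProd_apply]

theorem invParity_one (t : W) : cs.invParity 1 t = 0 := by
  simp [invParity]

theorem invParity_mul (w₁ w₂ t : W) :
    cs.invParity (w₁ * w₂) t = cs.invParity w₂ t + cs.invParity w₁ (w₂ * t * w₂⁻¹) := by
  show (cs.titsRep (w₁ * w₂) (t, 0)).2 = _
  rw [map_mul, Equiv.Perm.mul_apply, titsRep_apply, titsRep_apply, zero_add]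

theorem invParity_self {t : W} (ht : cs.IsReflection t) : cs.invParity t t = 1 := by
  obtain ⟨q, i, rfl⟩ := ht
  have hsimple : cs.invParity (σ i) (σ i) = 1 := by
    simp [invParity, titsRep_simple, titsPerm_apply]
  have hconj : q⁻¹ * (q * σ i * q⁻¹) * q⁻¹⁻¹ = σ i := by group
  have h₁ := cs.invParity_mul (q * σ i) q⁻¹ (q * σ i * q⁻¹)
  have h₂ := cs.invParity_mul q (σ i) (σ i)
  have h₃ := cs.invParity_mul q q⁻¹ (q * σ i * q⁻¹)
  rw [hconj] at h₁
  rw [hconj, mul_inv_cancel, invParity_one] at h₃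
  rw [mul_inv_cancel_right, hsimple] at h₂
  linear_combination h₁ + h₂ - h₃

theorem isRightInversion_of_invParity_eq_one {w t : W} (h : cs.invParity w t = 1) :
    cs.IsRightInversion w t := by
  obtain ⟨ω, hred, rfl⟩ := cs.exists_isReduced w
  rw [invParity_wordProd] at h
  refine cs.isRightInversion_of_mem_rightInvSeq hred (List.count_pos_iff.mp ?_)
  refine Nat.pos_of_ne_zero fun h0 => ?_
  simp [h0] at h

theorem invParity_eq_one_iff {w t : W} (ht : cs.IsReflection t) :
    cs.invParity w t = 1 ↔ cs.IsRightInversion w t := by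
  refine ⟨cs.isRightInversion_of_invParity_eq_one, fun hw => ?_⟩
  by_contra h
  have h0 : cs.invParity w t = 0 := by
    generalize cs.invParity w t = a at h
    revert a; decide
  have hwt : cs.IsRightInversion (w * t) t := by
    apply cs.isRightInversion_of_invParity_eq_one
    rw [invParity_mul, cs.invParity_self ht, mul_inv_cancel_right, h0, add_zero]
  have := hwt.2
  rw [mul_assoc, ht.mul_self, mul_one] at this
  exact absurd hw.2 (by omega)

theorem mem_rightInvSeq_of_isRightInversion {ω : List B} {t : W}
    (h : cs.IsRightInversion (π ω) t) : t ∈ cs.rightInvSeq ω := by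
  have hpar := (cs.invParity_eq_one_iff h.1).mpr h
  rw [invParity_wordProd] at hpar
  by_contra hmem
  simp [List.count_eq_zero.mpr hmem] at hpar

theorem isRightInversion_mul_iff (w₁ w₂ t : W) :
    cs.IsRightInversion (w₁ * w₂) t ↔
      Xor (cs.IsRightInversion w₂ t) (cs.IsRightInversion w₁ (w₂ * t * w₂⁻¹)) := by
  by_cases ht : cs.IsReflection t
  · have ht' : cs.IsReflection (w₂ * t * w₂⁻¹) := ht.conj w₂
    rw [← cs.invParity_eq_one_iff ht, ← cs.invParity_eq_one_iff ht,
      ← cs.invParity_eq_one_iff ht', invParity_mul]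
    generalize cs.invParity w₂ t = a
    generalize cs.invParity w₁ (w₂ * t * w₂⁻¹) = b
    revert a b; unfold Xor; decide
  · have ht' : ¬ cs.IsReflection (w₂ * t * w₂⁻¹) := by rwa [← isReflection_conj_iff] at ht
    simp only [IsRightInversion, ht, ht', false_and, xor_self]

theorem setOf_isRightInversion_wordProd {ω : List B} (hred : cs.IsReduced ω) :
    {t | cs.IsRightInversion (π ω) t} = {t | t ∈ cs.rightInvSeq ω} :=
  Set.ext fun _ =>
    ⟨cs.mem_rightInvSeq_of_isRightInversion, cs.isRightInversion_of_mem_rightInvSeq hred⟩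

theorem finite_setOf_isRightInversion (w : W) : {t | cs.IsRightInversion w t}.Finite := by
  obtain ⟨ω, hred, rfl⟩ := cs.exists_isReduced w
  rw [cs.setOf_isRightInversion_wordProd hred]
  exact (cs.rightInvSeq ω).finite_toSet

theorem ncard_setOf_isRightInversion (w : W) : {t | cs.IsRightInversion w t}.ncard = ℓ w := by
  obtain ⟨ω, hred, rfl⟩ := cs.exists_isReduced w
  rw [cs.setOf_isRightInversion_wordProd hred, ← List.coe_toFinset, Set.ncard_coe_finset,
    List.toFinset_card_of_nodup hred.nodup_rightInvSeq, length_rightInvSeq, hred]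

theorem setOf_isRightInversion_mul (w₁ w₂ : W) :
    {t | cs.IsRightInversion (w₁ * w₂) t} =
      {t | cs.IsRightInversion w₂ t} ∆ (MulAut.conj w₂ ⁻¹' {t | cs.IsRightInversion w₁ t}) := by
  ext t
  simp [Set.mem_symmDiff, isRightInversion_mul_iff, Xor]

theorem wordProd_mem_closure {ω : List B} (hω : ∀ i ∈ ω, i ∈ J) : π ω ∈ W_J := by
  refine list_prod_mem fun _ h => ?_
  obtain ⟨i, hi, rfl⟩ := List.mem_map.mp h
  exact Subgroup.subset_closure ⟨i, hω i hi, rfl⟩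

theorem exists_wordProd_eq_of_mem_closure {u : W} (hu : u ∈ W_J) :
    ∃ ω : List B, (∀ i ∈ ω, i ∈ J) ∧ π ω = u := by
  induction hu using Subgroup.closure_induction with
  | mem _ h =>
    obtain ⟨i, hi, rfl⟩ := h
    exact ⟨[i], by simpa using hi, cs.wordProd_singleton i⟩
  | one => exact ⟨[], by simp, cs.wordProd_nil⟩
  | mul _ _ _ _ ih₁ ih₂ =>
    obtain ⟨ω₁, hω₁, rfl⟩ := ih₁
    obtain ⟨ω₂, hω₂, rfl⟩ := ih₂
    exact ⟨ω₁ ++ ω₂, fun i hi => (List.mem_append.mp hi).elim (hω₁ i) (hω₂ i),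
      cs.wordProd_append ω₁ ω₂⟩
  | inv _ _ ih =>
    obtain ⟨ω, hω, rfl⟩ := ih
    exact ⟨ω.reverse, by simpa using hω, cs.wordProd_reverse ω⟩

theorem mem_closure_of_mem_rightInvSeq {ω : List B} (hω : ∀ i ∈ ω, i ∈ J) {t : W}
    (ht : t ∈ cs.rightInvSeq ω) : t ∈ W_J := by
  induction ω with
  | nil => simp [rightInvSeq] at ht
  | cons i ω ih =>
    have hω' : ∀ j ∈ ω, j ∈ J := fun j hj => hω j (List.mem_cons_of_mem i hj)
    rw [rightInvSeq, List.mem_cons] at ht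
    rcases ht with rfl | ht
    · have hπ := cs.wordProd_mem_closure hω'
      have hi : σ i ∈ W_J := Subgroup.subset_closure ⟨i, hω i List.mem_cons_self, rfl⟩
      exact mul_mem (mul_mem (inv_mem hπ) hi) hπ
    · exact ih hω' ht

theorem mem_closure_of_isRightInversion {u t : W} (hu : u ∈ W_J)
    (h : cs.IsRightInversion u t) : t ∈ W_J := by
  obtain ⟨ω, hω, rfl⟩ := cs.exists_wordProd_eq_of_mem_closure hu
  exact cs.mem_closure_of_mem_rightInvSeq hω (cs.mem_rightInvSeq_of_isRightInversion h)

theorem length_mul_of_forall_length_le {x u : W} (hx : ∀ v ∈ W_J, ℓ x ≤ ℓ (v * x))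
    (hu : u ∈ W_J) : ℓ (u * x) = ℓ u + ℓ x := by
  have hdisj : Disjoint {t | cs.IsRightInversion x t}
      (MulAut.conj x ⁻¹' {t | cs.IsRightInversion u t}) := by
    -- a common inversion `t` would make `x t x⁻¹ ∈ W_J` shorten `x` from the left
    refine Set.disjoint_left.mpr fun t htx htu => ?_
    have hshorter := hx _ (cs.mem_closure_of_isRightInversion hu htu)
    rw [MulAut.conj_apply, inv_mul_cancel_right] at hshorter
    exact absurd htx.2 (not_lt.mpr hshorter)
  have hfin := cs.finite_setOf_isRightInversion
  have hconj : (MulAut.conj x ⁻¹' {t | cs.IsRightInversion u t}).ncard = ℓ u := by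
    rw [Set.ncard_preimage_of_injective_subset_range (MulAut.conj x).injective
      (by simp [(MulAut.conj x).surjective.range_eq]), ncard_setOf_isRightInversion]
  rw [← ncard_setOf_isRightInversion cs (u * x), setOf_isRightInversion_mul,
    hdisj.symmDiff_eq_sup, ← ncard_setOf_isRightInversion cs x, ← hconj, add_comm]
  exact Set.ncard_union_eq hdisj (hfin x) ((hfin u).preimage (MulAut.conj x).injective.injOn)

theorem eq_one_of_mul_eq {x y u : W} (hx : ∀ v ∈ W_J, ℓ x ≤ ℓ (v * x))
    (hy : ∀ v ∈ W_J, ℓ y ≤ ℓ (v * y)) (hu : u ∈ W_J) (h : u * y = x) : u = 1 := by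
  subst h
  have h₁ := cs.length_mul_of_forall_length_le hy hu
  have h₂ := cs.length_mul_of_forall_length_le hx (inv_mem hu)
  rw [inv_mul_cancel_left, length_inv] at h₂
  exact cs.length_eq_zero_iff.mp (by omega)

theorem setOf_isRightInversion_eq_of_forall_length_le {w₀ : W} (hw₀ : w₀ ∈ W_J)
    (hmax : ∀ u ∈ W_J, ℓ u ≤ ℓ w₀) :
    {t | cs.IsRightInversion w₀ t} = {t | cs.IsReflection t ∧ t ∈ W_J} := by
  ext t
  refine ⟨fun h => ⟨h.1, cs.mem_closure_of_isRightInversion hw₀ h⟩, fun ⟨ht, htJ⟩ => ⟨ht, ?_⟩⟩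
  have := ht.length_mul_left_ne w₀
  have := hmax _ (mul_mem hw₀ htJ)
  omega

theorem length_mul_add_length {w₀ u : W} (hw₀ : w₀ ∈ W_J) (hmax : ∀ u ∈ W_J, ℓ u ≤ ℓ w₀)
    (hu : u ∈ W_J) : ℓ (w₀ * u) + ℓ u = ℓ w₀ := by
  have hw₀inv := cs.setOf_isRightInversion_eq_of_forall_length_le hw₀ hmax
  have hconj : MulAut.conj u ⁻¹' {t | cs.IsReflection t ∧ t ∈ W_J} =
      {t | cs.IsReflection t ∧ t ∈ W_J} := by
    ext t
    simp [isReflection_conj_iff, Subgroup.mul_mem_cancel_right _ (inv_mem hu),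
      Subgroup.mul_mem_cancel_left _ hu]
  have hsub : {t | cs.IsRightInversion u t} ⊆ {t | cs.IsReflection t ∧ t ∈ W_J} :=
    fun t h => ⟨h.1, cs.mem_closure_of_isRightInversion hu h⟩
  have hcard := congrArg Set.ncard (cs.setOf_isRightInversion_mul w₀ u)
  rw [hw₀inv, hconj, symmDiff_of_le hsub, Set.ncard_sdiff hsub (cs.finite_setOf_isRightInversion u),
    ← hw₀inv, ncard_setOf_isRightInversion, ncard_setOf_isRightInversion,
    ncard_setOf_isRightInversion] at hcard
  have := hmax u hu
  omega

theorem sum_T_sub_two_mul_length [Fintype W_J] {w₀ : W} (hw₀ : w₀ ∈ W_J)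
    (hmax : ∀ u ∈ W_J, ℓ u ≤ ℓ w₀) :
    ∑ u : W_J, (T ((ℓ w₀ : ℤ) - 2 * ℓ (u : W)) : ℤ[T;T⁻¹]) =
      T (-(ℓ w₀ : ℤ)) * ∑ u : W_J, T (2 * (ℓ (u : W) : ℤ)) := by
  rw [Finset.mul_sum]
  refine (Fintype.sum_equiv (Equiv.mulLeft ⟨w₀, hw₀⟩) _ _ fun u => ?_).symm
  rw [← T_add, Equiv.coe_mulLeft, Subgroup.coe_mul, ← cs.length_mul_add_length hw₀ hmax u.2]
  congr 1
  push_cast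
  ring

section Hecke

variable {H : Type*} [Ring H] [Algebra ℤ[T;T⁻¹] H] (δ : Module.Basis W ℤ[T;T⁻¹] H)

structure IsStandardHeckeBasis : Prop where
  one : δ 1 = 1
  mul_of_length_add : ∀ u w : W, ℓ (u * w) = ℓ u + ℓ w → δ u * δ w = δ (u * w)
  simple_mul_self : ∀ i : B, δ (σ i) * δ (σ i) = 1 + (T (-1) - T 1 : ℤ[T;T⁻¹]) • δ (σ i)

-- `cs.symmetrizer δ W_J (ℓ w_J)` is the element `b_{w_J}`.
noncomputable def symmetrizer (P : Subgroup W) [Fintype P] (d : ℤ) : H :=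
  ∑ u : P, (T (d - ℓ (u : W)) : ℤ[T;T⁻¹]) • δ u

variable {cs δ}

theorem IsStandardHeckeBasis.mul_simple (hδ : cs.IsStandardHeckeBasis δ) (w : W) (i : B) :
    δ w * δ (σ i) =
      δ (w * σ i) + if ℓ (w * σ i) < ℓ w then (T (-1) - T 1 : ℤ[T;T⁻¹]) • δ w else 0 := by
  rcases cs.length_mul_simple w i with hup | hdown
  · rw [if_neg (by omega), add_zero, hδ.mul_of_length_add _ _ (by rw [length_simple, hup])]
  · have hw : δ (w * σ i) * δ (σ i) = δ w := by
      rw [hδ.mul_of_length_add _ _ (by rw [simple_mul_simple_cancel_right, length_simple]; omega),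
        simple_mul_simple_cancel_right]
    rw [if_pos (by omega), ← hw, mul_assoc, hδ.simple_mul_self, mul_add, mul_one, mul_smul_comm]

theorem IsStandardHeckeBasis.repr_mul_apply_one (hδ : cs.IsStandardHeckeBasis δ) (a b : W) :
    δ.repr (δ a * δ b) 1 = if a * b = 1 then 1 else 0 := by
  induction hn : ℓ b using Nat.strong_induction_on generalizing a b with
  | _ n ih =>
  rcases eq_or_ne b 1 with rfl | hne
  · rw [hδ.one, mul_one, mul_one, δ.repr_self, Finsupp.single_apply]
  obtain ⟨i, hi⟩ := cs.exists_leftDescent_of_ne_one hne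
  obtain ⟨b', rfl⟩ : ∃ b', b = σ i * b' := ⟨σ i * b, (cs.simple_mul_simple_cancel_left i).symm⟩
  rw [IsLeftDescent, simple_mul_simple_cancel_left] at hi
  have hlen : ℓ (σ i * b') = ℓ b' + 1 := by
    rcases cs.length_simple_mul b' i with h | h <;> omega
  rw [← hδ.mul_of_length_add _ _ (by rw [length_simple, hlen, add_comm]), ← mul_assoc,
    hδ.mul_simple, add_mul, map_add, Finsupp.add_apply, ih _ (by omega) _ _ rfl, ← mul_assoc]
  refine add_eq_left.mpr ?_
  split_ifs with hdesc
  · -- `a * b' = 1` would force `ℓ (a * σ i) = ℓ (b'⁻¹ * σ i) = ℓ (σ i * b') > ℓ a`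
    have hab : a * b' ≠ 1 := by
      intro h
      rw [mul_eq_one_iff_eq_inv.mp h, ← length_inv, mul_inv_rev, inv_inv, inv_simple, hlen,
        length_inv] at hdesc
      omega
    rw [smul_mul_assoc, map_smul, Finsupp.smul_apply, ih _ (by omega) _ _ rfl, if_neg hab,
      smul_zero]
  · rw [zero_mul, map_zero, Finsupp.zero_apply]

theorem map_symmetrizer (ι : H →ₗ[ℤ[T;T⁻¹]] H) (hι : ∀ x : W, ι (δ x) = δ x⁻¹)
    (P : Subgroup W) [Fintype P] (d : ℤ) : ι (cs.symmetrizer δ P d) = cs.symmetrizer δ P d := by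
  simp only [symmetrizer, map_sum, map_smul, hι]
  exact Fintype.sum_equiv (Equiv.inv P) _ _ fun u => by simp [length_inv]

theorem IsStandardHeckeBasis.symmetrizer_mul_simple (hδ : cs.IsStandardHeckeBasis δ)
    {P : Subgroup W} [Fintype P] (d : ℤ) {i : B} (hi : σ i ∈ P) :
    cs.symmetrizer δ P d * δ (σ i) = (T (-1) : ℤ[T;T⁻¹]) • cs.symmetrizer δ P d := by
  have hreindex : ∑ u : P, (T (d - ℓ (u : W)) : ℤ[T;T⁻¹]) • δ ((u : W) * σ i) =
      ∑ u : P, (T (d - ℓ ((u : W) * σ i)) : ℤ[T;T⁻¹]) • δ u :=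
    Fintype.sum_equiv (Equiv.mulRight ⟨σ i, hi⟩) _ _ fun u => by simp
  simp only [symmetrizer, Finset.sum_mul, smul_mul_assoc, hδ.mul_simple, smul_add,
    Finset.sum_add_distrib, Finset.smul_sum]
  rw [hreindex, ← Finset.sum_add_distrib]
  refine Finset.sum_congr rfl fun u _ => ?_
  rcases cs.length_mul_simple u i with hup | hdown
  · rw [if_neg (by omega), smul_zero, add_zero, smul_smul, ← T_add, hup]
    congr 2
    push_cast
    ring
  · rw [if_pos (by omega), smul_smul, ← add_smul, smul_smul, ← T_add]
    congr 1
    rw [show (d - ℓ ((u : W) * σ i) : ℤ) = d - ℓ (u : W) + 1 by omega, mul_sub,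
      ← T_add, ← T_add, add_sub_cancel, add_comm]

theorem IsStandardHeckeBasis.symmetrizer_mul_of_mem (hδ : cs.IsStandardHeckeBasis δ)
    [Fintype W_J] (d : ℤ) {u : W} (hu : u ∈ W_J) :
    cs.symmetrizer δ W_J d * δ u = (T (-ℓ u : ℤ) : ℤ[T;T⁻¹]) • cs.symmetrizer δ W_J d := by
  induction hn : ℓ u using Nat.strong_induction_on generalizing u with
  | _ n ih =>
  rcases eq_or_ne u 1 with rfl | hne
  · simp [hδ.one, ← hn]
  obtain ⟨i, hi⟩ := cs.exists_rightDescent_of_ne_one hne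
  -- a right descent of `u ∈ W_J` is a right inversion, hence lies in `W_J`
  have hiJ : σ i ∈ W_J := cs.mem_closure_of_isRightInversion hu ⟨cs.isReflection_simple i, hi⟩
  obtain ⟨u', rfl⟩ : ∃ u', u = u' * σ i := ⟨u * σ i, (cs.simple_mul_simple_cancel_right i).symm⟩
  rw [IsRightDescent, simple_mul_simple_cancel_right] at hi
  have hlen : ℓ (u' * σ i) = ℓ u' + 1 := by
    rcases cs.length_mul_simple u' i with h | h <;> omega
  have hu' : u' ∈ W_J := by simpa using mul_mem hu hiJ
  rw [← hδ.mul_of_length_add _ _ (by rw [length_simple, hlen]), ← mul_assoc,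
    ih _ (by omega) hu' rfl, smul_mul_assoc, hδ.symmetrizer_mul_simple d hiJ, smul_smul, ← T_add,
    ← hn, hlen]
  congr 2
  push_cast
  ring

theorem IsStandardHeckeBasis.symmetrizer_mul_self (hδ : cs.IsStandardHeckeBasis δ)
    [Fintype W_J] (d : ℤ) :
    cs.symmetrizer δ W_J d * cs.symmetrizer δ W_J d =
      (∑ u : W_J, (T (d - 2 * ℓ (u : W)) : ℤ[T;T⁻¹])) • cs.symmetrizer δ W_J d := by
  nth_rewrite 2 [symmetrizer]
  rw [Finset.mul_sum, Finset.sum_smul]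
  refine Finset.sum_congr rfl fun u _ => ?_
  rw [mul_smul_comm, hδ.symmetrizer_mul_of_mem d u.2, smul_smul, ← T_add]
  congr 2
  ring

theorem IsStandardHeckeBasis.symmetrizer_mul_of_forall_length_le
    (hδ : cs.IsStandardHeckeBasis δ) [Fintype W_J] (d : ℤ) {y : W}
    (hy : ∀ v ∈ W_J, ℓ y ≤ ℓ (v * y)) :
    cs.symmetrizer δ W_J d * δ y = ∑ u : W_J, (T (d - ℓ (u : W)) : ℤ[T;T⁻¹]) • δ (u * y) := by
  rw [symmetrizer, Finset.sum_mul]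
  refine Finset.sum_congr rfl fun u _ => ?_
  rw [smul_mul_assoc, hδ.mul_of_length_add _ _ (cs.length_mul_of_forall_length_le hy u.2)]

theorem IsStandardHeckeBasis.repr_mul_symmetrizer_mul_apply_one
    (hδ : cs.IsStandardHeckeBasis δ) [Fintype W_J] (d : ℤ) {x y : W}
    (hx : ∀ v ∈ W_J, ℓ x ≤ ℓ (v * x)) (hy : ∀ v ∈ W_J, ℓ y ≤ ℓ (v * y)) :
    δ.repr (δ x⁻¹ * (cs.symmetrizer δ W_J d * δ y)) 1 = if x = y then T d else 0 := by
  have hcond : ∀ u : W_J, x⁻¹ * ((u : W) * y) = 1 ↔ u = 1 ∧ x = y := by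
    intro u
    rw [inv_mul_eq_one]
    constructor
    · intro h
      have hu : (u : W) = 1 := cs.eq_one_of_mul_eq hx hy u.2 h.symm
      exact ⟨Subtype.ext hu, by rw [h, hu, one_mul]⟩
    · rintro ⟨rfl, rfl⟩
      simp
  rw [hδ.symmetrizer_mul_of_forall_length_le d hy, Finset.mul_sum, map_sum,
    Finsupp.finsetSum_apply]
  simp only [mul_smul_comm, map_smul, Finsupp.smul_apply, smul_eq_mul, hδ.repr_mul_apply_one,
    hcond]
  split_ifs with hxy <;> simp [hxy]

end Hecke

end CoxeterSystem

-- With `m_x = b_{w_J} δ_x`, the normalising factor `v^{-d_J}/π(J)` is moved to the right-hand side.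
/-- The standard basis {m_x : x ∈ ᴶW} of the spherical module M(J) ≅ b_{w_J}H
is orthonormal for ⟨h₁,h₂⟩_M := (v^{−d_J}/π(J))·ε(i(h₁)h₂). Under the identification
m_x = b_{w_J}δ_x, and clearing the denominator π(J) and the factor v^{−d_J}, this says
ε(i(b_{w_J}δ_x)·(b_{w_J}δ_y)) = v^{d_J}·π(J) if x = y and 0 otherwise. -/
theorem stmt_8 {B W : Type} [Group W] {M : CoxeterMatrix B} (cs : CoxeterSystem M W)
    (J : Set B) (WJ : Subgroup W) (hWJ : WJ = Subgroup.closure (cs.simple '' J))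
    [Fintype WJ]
    (H : Type) [Ring H] [Algebra (LaurentPolynomial ℤ) H]
    (δ : Module.Basis W (LaurentPolynomial ℤ) H) (hδ1 : δ 1 = 1)
    (hmul : ∀ u w : W, cs.length (u * w) = cs.length u + cs.length w →
        δ u * δ w = δ (u * w))
    (hquad : ∀ i : B, δ (cs.simple i) * δ (cs.simple i)
        = 1 + ((T (-1) - T 1 : LaurentPolynomial ℤ)) • δ (cs.simple i))
    (ι : H →ₗ[LaurentPolynomial ℤ] H)
    (hanti : ∀ a b : H, ι (a * b) = ι b * ι a)
    (hι : ∀ x : W, ι (δ x) = δ x⁻¹)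
    (wJ : W) (hwJmem : wJ ∈ WJ) (hwJmax : ∀ u ∈ WJ, cs.length u ≤ cs.length wJ) :
    ∀ x y : W,
      (∀ y' : W, (∃ u ∈ WJ, y' = u * x) → cs.length x ≤ cs.length y') →
      (∀ y' : W, (∃ u ∈ WJ, y' = u * y) → cs.length y ≤ cs.length y') →
      δ.repr (ι ((∑ u : WJ,
            (T ((cs.length wJ : ℤ) - (cs.length (u : W) : ℤ)) : LaurentPolynomial ℤ) • δ (u : W))
            * δ x)
          * ((∑ u : WJ,
            (T ((cs.length wJ : ℤ) - (cs.length (u : W) : ℤ)) : LaurentPolynomial ℤ) • δ (u : W))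
            * δ y)) 1
        = if x = y then
            (T (cs.length wJ : ℤ) : LaurentPolynomial ℤ)
              * (T (-(cs.length wJ : ℤ)) * ∑ u : WJ, (T (2 * (cs.length (u : W) : ℤ)) : LaurentPolynomial ℤ))
          else 0 := by
  intro x y hx hy
  subst hWJ
  have hδ : cs.IsStandardHeckeBasis δ := ⟨hδ1, hmul, hquad⟩
  change δ.repr (ι (cs.symmetrizer δ _ (cs.length wJ) * δ x) *
    (cs.symmetrizer δ _ (cs.length wJ) * δ y)) 1 = _
  rw [hanti, hι, CoxeterSystem.map_symmetrizer ι hι, mul_assoc, ← mul_assoc (cs.symmetrizer δ _ _),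
    hδ.symmetrizer_mul_self, smul_mul_assoc, mul_smul_comm, map_smul, Finsupp.smul_apply,
    smul_eq_mul, hδ.repr_mul_symmetrizer_mul_apply_one _ (fun v hv => hx _ ⟨v, hv, rfl⟩)
      (fun v hv => hy _ ⟨v, hv, rfl⟩), cs.sum_T_sub_two_mul_length hwJmem hwJmax]
  split_ifs <;> ring
end

section
/- In the spherical module M(J) with the orthonormal bilinear form ⟨·,·⟩_M on the standard basis, for any two expressions x̲, y̲ one has ⟨1⊗b_{x̲}, 1⊗b_{y̲}⟩_M = Σ v^{sdef(e̲)+sdef(f̲)}, where the sum runs over all pairs of subexpressions e̲ ⊆ x̲, f̲ ⊆ y̲ with W_J·x̲^{e̲} = W_J·y̲^{f̲}. -/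
/-!
Let `m_z` (`z` minimal in `W_J z`) be the standard basis of `M(J)`. Multiplying `m_z` on the
right by `b_s = δ_s + v` gives `m_{zs} + v m_z` if `zs > z` and `m_{zs} + v⁻¹ m_z` if `zs < z`;
if `zs` is not minimal in its coset, Deodhar's lemma gives `zs = s_j z` with `j ∈ J`, and since
`m_1 δ_{s_j} = v⁻¹ m_1` the product is `(v⁻¹ + v) m_z`. These are the weights of the coset
stroll, so `1 ⊗ b_{x̲} = Σ_{e̲ ⊆ x̲} v^{sdef(e̲)} m_{W_J x̲^{e̲}}`, and the formula follows from
orthonormality of the `m_z`.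

The Coxeter-theoretic input (`ℓ(uz) = ℓ(u) + ℓ(z)` for `u ∈ W_J` and minimal `z`, and Deodhar's
lemma) rests on the exchange property. That comes from the sign action of `W` on `W × {±1}`:
the parity of the number of occurrences of `t` in the inversion sequence of a word depends only
on the element the word represents.
-/

open LaurentPolynomial MulOpposite
open scoped Classical

/-- The spherical defect of a subexpression, computed along the coset stroll
(`mcr` sends an element to the minimal-length representative of its coset `W_J·w`). -/
noncomputable def sdefAux {B W : Type} [Group W] {M : CoxeterMatrix B}
    (cs : CoxeterSystem M W) (mcr : W → W) : W → List (B × Bool) → ℤ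
  | _, [] => 0
  | z, p :: l =>
      (if mcr (z * cs.simple p.1) ≠ z * cs.simple p.1 then (if p.2 then -1 else 1)
       else if cs.length z < cs.length (z * cs.simple p.1) then (if p.2 then 0 else 1)
       else (if p.2 then 0 else -1))
      + sdefAux cs mcr (if p.2 then mcr (z * cs.simple p.1) else z) l

/-- The letters of an expression selected by a subexpression. -/
def subletters {B : Type} (l : List (B × Bool)) : List B :=
  l.filterMap fun p => if p.2 then some p.1 else none

section ConjSign

variable {G : Type*} [Group G]

theorem mul_mul_inv_eq_iff_eq_inv_mul_mul (g t c : G) : g * t * g⁻¹ = c ↔ t = g⁻¹ * c * g := by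
  constructor <;> rintro rfl <;> group

theorem mul_pow_eq_inv_of_mul_self_eq_one {a b : G} (ha : a * a = 1) (hb : b * b = 1) (k : ℕ) :
    (b * a) ^ k = ((a * b) ^ k)⁻¹ := by
  rw [← inv_pow, mul_inv_rev, inv_eq_of_mul_eq_one_right ha, inv_eq_of_mul_eq_one_right hb]

noncomputable def conjSignPerm (a : G) (ha : a * a = 1) : Equiv.Perm (G × ℤˣ) :=
  Function.Involutive.toPerm (fun x => (a * x.1 * a, if x.1 = a then -x.2 else x.2)) <| by
    rintro ⟨t, e⟩
    have hfix : a * t * a = a ↔ t = a := by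
      rw [mul_assoc, mul_eq_left, mul_eq_one_iff_eq_inv, inv_eq_of_mul_eq_one_right ha]
    have hconj : a * (a * t * a) * a = t := by
      rw [← mul_assoc, ← mul_assoc, ha, one_mul, mul_assoc, ha, mul_one]
    by_cases h : t = a <;> simp [hfix, h, hconj, ha]

theorem conjSignPerm_apply (a : G) (ha : a * a = 1) (x : G × ℤˣ) :
    conjSignPerm a ha x = (a * x.1 * a, if x.1 = a then -x.2 else x.2) := rfl

theorem conjSignPerm_mul_pow_apply {a b : G} (ha : a * a = 1) (hb : b * b = 1) (n : ℕ)
    (t : G) (e : ℤˣ) :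
    ((conjSignPerm a ha * conjSignPerm b hb) ^ n) (t, e)
      = ((a * b) ^ n * t * (b * a) ^ n,
         (∏ k ∈ Finset.range (2 * n), if t = (b * a) ^ k * b then -1 else 1) * e) := by
  induction n with
  | zero => simp
  | succ n ih =>
    have hconj (c : G) :
        (a * b) ^ n * t * (b * a) ^ n = c ↔ t = (b * a) ^ n * c * (a * b) ^ n := by
      rw [mul_pow_eq_inv_of_mul_self_eq_one ha hb]
      exact mul_mul_inv_eq_iff_eq_inv_mul_mul _ t c
    have hb' : b * (a * b) ^ n = (b * a) ^ n * b := (mul_pow_mul b a n).symm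
    have hflip_b : (a * b) ^ n * t * (b * a) ^ n = b ↔ t = (b * a) ^ (2 * n) * b := by
      rw [hconj, mul_assoc _ b, hb', ← mul_assoc, ← pow_add, two_mul]
    have hflip_a :
        b * ((a * b) ^ n * t * (b * a) ^ n) * b = a ↔ t = (b * a) ^ (2 * n + 1) * b := by
      have hbX (X : G) : b * X * b = a ↔ X = b * a * b := by
        simpa [inv_eq_of_mul_eq_one_right hb] using mul_mul_inv_eq_iff_eq_inv_mul_mul b X a
      rw [hbX, hconj, mul_assoc _ (b * a * b), mul_assoc _ b, hb', ← mul_assoc, ← mul_assoc,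
        ← pow_succ, ← pow_add, add_right_comm, ← two_mul]
    rw [pow_succ', Equiv.Perm.mul_apply, ih, Equiv.Perm.mul_apply, conjSignPerm_apply,
      conjSignPerm_apply]
    refine Prod.ext ?_ ?_
    · rw [pow_succ', pow_succ]
      simp only [mul_assoc]
    · simp only [hflip_a, hflip_b, show 2 * (n + 1) = 2 * n + 1 + 1 by ring,
        Finset.prod_range_succ]
      split_ifs <;> simp

theorem conjSignPerm_mul_pow_eq_one {a b : G} (ha : a * a = 1) (hb : b * b = 1) {m : ℕ}
    (hm : (a * b) ^ m = 1) : (conjSignPerm a ha * conjSignPerm b hb) ^ m = 1 := by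
  have hm' : (b * a) ^ m = 1 := by rw [mul_pow_eq_inv_of_mul_self_eq_one ha hb, hm, inv_one]
  ext ⟨t, e⟩ : 1
  -- The `2m` signs repeat with period `m`, so their product is a square in `ℤˣ`.
  rw [conjSignPerm_mul_pow_apply, two_mul, Finset.prod_range_add]
  simp [pow_add, hm, hm', Int.units_mul_self]

end ConjSign

namespace CoxeterSystem

open List

variable {B W : Type*} [Group W] {M : CoxeterMatrix B} (cs : CoxeterSystem M W)

local prefix:100 "s" => cs.simple
local prefix:100 "π" => cs.wordProd
local prefix:100 "ℓ" => cs.length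
local prefix:100 "ris" => cs.rightInvSeq
local prefix:100 "lis" => cs.leftInvSeq

theorem isLiftable_conjSignPerm :
    M.IsLiftable fun i => conjSignPerm (s i) (cs.simple_mul_simple_self i) := fun i i' =>
  conjSignPerm_mul_pow_eq_one _ _ (cs.simple_mul_simple_pow i i')

noncomputable def signRep : W →* Equiv.Perm (W × ℤˣ) :=
  cs.lift ⟨_, cs.isLiftable_conjSignPerm⟩

theorem signRep_wordProd (ω : List B) (t : W) (e : ℤˣ) :
    cs.signRep (π ω) (t, e) = (π ω * t * (π ω)⁻¹, (-1) ^ (ris ω).count t * e) := by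
  induction ω with
  | nil => simp [rightInvSeq]
  | cons i ω ih =>
    rw [wordProd_cons, map_mul, Equiv.Perm.mul_apply, ih, signRep, lift_apply_simple,
      conjSignPerm_apply]
    refine Prod.ext (by simp [mul_assoc, cs.inv_simple]) ?_
    have hflip : π ω * t * (π ω)⁻¹ = s i ↔ (π ω)⁻¹ * s i * π ω = t := by
      rw [mul_mul_inv_eq_iff_eq_inv_mul_mul, eq_comm]
    simp only [rightInvSeq, count_cons, hflip, beq_iff_eq]
    split_ifs <;> simp [pow_succ]

theorem neg_one_pow_count_rightInvSeq_eq {ω ω' : List B} (h : π ω = π ω') (t : W) :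
    (-1 : ℤˣ) ^ (ris ω).count t = (-1) ^ (ris ω').count t := by
  simpa [signRep_wordProd] using congrArg Prod.snd (congrArg (cs.signRep · (t, 1)) h)

theorem neg_one_pow_count_leftInvSeq_eq {ω ω' : List B} (h : π ω = π ω') (t : W) :
    (-1 : ℤˣ) ^ (lis ω).count t = (-1) ^ (lis ω').count t := by
  rw [← count_reverse, ← rightInvSeq_reverse, ← count_reverse (l := lis ω'),
    ← rightInvSeq_reverse]
  exact cs.neg_one_pow_count_rightInvSeq_eq (by simp [wordProd_reverse, h]) t

theorem length_wordProd_eraseIdx_lt {ω : List B} {k : ℕ} (hk : k < ω.length) :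
    ℓ (π (ω.eraseIdx k)) < ω.length :=
  (cs.length_wordProd_le _).trans_lt (by rw [length_eraseIdx_of_lt hk]; omega)

theorem simple_mem_leftInvSeq_of_isLeftDescent {ω : List B} (hω : cs.IsReduced ω) {j : B}
    (h : cs.IsLeftDescent (π ω) j) : s j ∈ lis ω := by
  obtain ⟨α, hα, hjω⟩ := cs.exists_isReduced (s j * π ω)
  have hprod : π (j :: α) = π ω := by
    rw [wordProd_cons, ← hjω, simple_mul_simple_cancel_left]
  have hjα : cs.IsReduced (j :: α) := by
    have := cs.length_simple_mul (π ω) j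
    unfold IsLeftDescent at h
    unfold IsReduced at hα hω ⊢
    rw [hprod, length_cons, ← hα, ← hjω]
    omega
  -- `s j` occurs exactly once in `lis (j :: α)`, so by parity it occurs in `lis ω`.
  have hcount : (lis (j :: α)).count (s j) = 1 :=
    le_antisymm (nodup_iff_count_le_one.mp hjα.nodup_leftInvSeq _)
      (count_pos_iff.mpr (by simp [leftInvSeq]))
  have hpar := cs.neg_one_pow_count_leftInvSeq_eq hprod (s j)
  rw [hcount, pow_one] at hpar
  refine count_pos_iff.mp (Nat.pos_of_ne_zero fun h0 => ?_)
  rw [h0, pow_zero] at hpar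
  exact absurd hpar (by decide)

theorem exists_eraseIdx_of_isLeftDescent {ω : List B} (hω : cs.IsReduced ω) {j : B}
    (h : cs.IsLeftDescent (π ω) j) : ∃ k < ω.length, s j * π ω = π (ω.eraseIdx k) := by
  obtain ⟨k, hk, hkj⟩ := mem_iff_getElem.mp (cs.simple_mem_leftInvSeq_of_isLeftDescent hω h)
  rw [length_leftInvSeq] at hk
  refine ⟨k, hk, ?_⟩
  rw [← getD_leftInvSeq_mul_wordProd, getD_eq_getElem _ _ (by simpa using hk), hkj]

theorem isLeftDescent_or_exists_eraseIdx_of_append {ω ζ : List B}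
    (hωζ : cs.IsReduced (ω ++ ζ)) {j : B} (h : cs.IsLeftDescent (π ω * π ζ) j) :
    cs.IsLeftDescent (π ω) j ∨ ∃ k < ζ.length, s j * π ω * π ζ = π ω * π (ζ.eraseIdx k) := by
  rw [← wordProd_append] at h
  obtain ⟨k, hk, hkj⟩ := cs.exists_eraseIdx_of_isLeftDescent hωζ h
  rcases lt_or_ge k ω.length with hkω | hkω
  · left
    rw [eraseIdx_append_of_lt_length hkω, wordProd_append, wordProd_append, ← mul_assoc] at hkj
    have hω := (hωζ.take ω.length).eq
    rw [take_left] at hω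
    unfold IsLeftDescent
    rw [mul_right_cancel hkj, hω]
    exact cs.length_wordProd_eraseIdx_lt hkω
  · right
    rw [length_append] at hk
    refine ⟨k - ω.length, by omega, ?_⟩
    rw [mul_assoc, ← wordProd_append, hkj, eraseIdx_append_of_length_le hkω, wordProd_append]

theorem exists_isReduced_sublist (ω : List B) :
    ∃ ω', cs.IsReduced ω' ∧ π ω' = π ω ∧ ω' <+ ω := by
  induction ω with
  | nil => exact ⟨[], by simp [IsReduced], rfl, Sublist.refl _⟩
  | cons i ω ih =>
    obtain ⟨ω', hω', hprod, hsub⟩ := ih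
    rcases cs.length_simple_mul (π ω') i with hup | hdown
    · refine ⟨i :: ω', ?_, by rw [wordProd_cons, wordProd_cons, hprod], hsub.cons_cons i⟩
      unfold IsReduced at hω' ⊢
      rw [wordProd_cons, hup, hω', length_cons]
    · obtain ⟨k, hk, hki⟩ :=
        cs.exists_eraseIdx_of_isLeftDescent hω' (show ℓ (s i * π ω') < ℓ (π ω') by omega)
      refine ⟨ω'.eraseIdx k, ?_, by rw [← hki, hprod, wordProd_cons],
        ((eraseIdx_sublist ω' k).trans hsub).cons i⟩
      unfold IsReduced at hω' ⊢
      rw [← hki, length_eraseIdx_of_lt hk]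
      omega

def parabolic (J : Set B) : Subgroup W := Subgroup.closure (cs.simple '' J)

variable {cs} {J : Set B}

theorem simple_mem_parabolic {j : B} (hj : j ∈ J) : s j ∈ cs.parabolic J :=
  Subgroup.subset_closure ⟨j, hj, rfl⟩

theorem wordProd_mem_parabolic {ω : List B} (hω : ∀ b ∈ ω, b ∈ J) :
    π ω ∈ cs.parabolic J := by
  induction ω with
  | nil => exact one_mem _
  | cons j ω ih =>
    rw [forall_mem_cons] at hω
    exact mul_mem (simple_mem_parabolic hω.1) (ih hω.2)

theorem exists_isReduced_of_mem_parabolic {u : W} (hu : u ∈ cs.parabolic J) :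
    ∃ ω, cs.IsReduced ω ∧ (∀ b ∈ ω, b ∈ J) ∧ π ω = u := by
  obtain ⟨ω, hωJ, rfl⟩ : ∃ ω : List B, (∀ b ∈ ω, b ∈ J) ∧ π ω = u := by
    induction hu using Subgroup.closure_induction with
    | mem _ hx =>
      obtain ⟨j, hj, rfl⟩ := hx
      exact ⟨[j], by simpa using hj, wordProd_singleton cs j⟩
    | one => exact ⟨[], by simp, wordProd_nil cs⟩
    | mul _ _ _ _ hx hy =>
      obtain ⟨ωx, hxJ, rfl⟩ := hx
      obtain ⟨ωy, hyJ, rfl⟩ := hy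
      exact ⟨ωx ++ ωy, fun b hb => (mem_append.mp hb).elim (hxJ b) (hyJ b),
        wordProd_append cs ωx ωy⟩
    | inv _ _ hx =>
      obtain ⟨ω, hωJ, rfl⟩ := hx
      exact ⟨ω.reverse, by simpa using hωJ, wordProd_reverse cs ω⟩
  obtain ⟨ω', hω', hprod, hsub⟩ := cs.exists_isReduced_sublist ω
  exact ⟨ω', hω', fun b hb => hωJ b (hsub.subset hb), hprod⟩

theorem exists_simple_of_mem_parabolic_of_length_eq_one {u : W} (hu : u ∈ cs.parabolic J)
    (h : ℓ u = 1) : ∃ j ∈ J, u = s j := by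
  obtain ⟨ω, hω, hωJ, rfl⟩ := exists_isReduced_of_mem_parabolic hu
  obtain ⟨j, rfl⟩ := List.length_eq_one_iff.mp (hω.eq.symm.trans h)
  exact ⟨j, hωJ j (mem_singleton_self j), wordProd_singleton cs j⟩

variable (cs J) in
def IsMinimalInCoset (z : W) : Prop := ∀ u ∈ cs.parabolic J, ℓ z ≤ ℓ (u * z)

theorem IsMinimalInCoset.length_wordProd_mul {z : W} (hz : cs.IsMinimalInCoset J z)
    {ω : List B} (hω : cs.IsReduced ω) (hωJ : ∀ b ∈ ω, b ∈ J) :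
    ℓ (π ω * z) = ω.length + ℓ z := by
  induction ω with
  | nil => simp
  | cons j ω ih =>
    rw [forall_mem_cons] at hωJ
    have hωz := ih (by simpa using hω.drop 1) hωJ.2
    have hjω : ℓ (s j * π ω) = ω.length + 1 := by rw [← wordProd_cons, hω.eq, length_cons]
    rw [wordProd_cons, mul_assoc, length_cons]
    rcases cs.length_simple_mul (π ω * z) j with hup | hdesc
    · omega
    exfalso
    obtain ⟨ζ, hζ, rfl⟩ := cs.exists_isReduced z
    have hωζ : cs.IsReduced (ω ++ ζ) := by
      unfold IsReduced at hζ ⊢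
      rw [wordProd_append, hωz, hζ, length_append]
    rcases cs.isLeftDescent_or_exists_eraseIdx_of_append hωζ
      (show ℓ (s j * (π ω * π ζ)) < ℓ (π ω * π ζ) by omega) with hjdesc | ⟨k, hk, hkj⟩
    · have := cs.length_wordProd_le ω
      unfold IsLeftDescent at hjdesc
      omega
    · -- `(π ω)⁻¹ * s j * π ω ∈ W_J` would shorten the minimal element `π ζ`.
      have hmem : (π ω)⁻¹ * s j * π ω ∈ cs.parabolic J :=
        mul_mem (mul_mem (inv_mem (wordProd_mem_parabolic hωJ.2))
          (simple_mem_parabolic hωJ.1)) (wordProd_mem_parabolic hωJ.2)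
      have hmin := hz _ hmem
      rw [show (π ω)⁻¹ * s j * π ω * π ζ = π (ζ.eraseIdx k) by
        rw [mul_assoc, mul_assoc, ← mul_assoc (s j), hkj, inv_mul_cancel_left]] at hmin
      have := cs.length_wordProd_eraseIdx_lt hk
      unfold IsReduced at hζ
      omega

theorem IsMinimalInCoset.length_mul {z u : W} (hz : cs.IsMinimalInCoset J z)
    (hu : u ∈ cs.parabolic J) : ℓ (u * z) = ℓ u + ℓ z := by
  obtain ⟨ω, hω, hωJ, rfl⟩ := exists_isReduced_of_mem_parabolic hu
  rw [hz.length_wordProd_mul hω hωJ, hω.eq]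

theorem IsMinimalInCoset.eq_one_of_mul {z u : W} (hz : cs.IsMinimalInCoset J z)
    (hu : u ∈ cs.parabolic J) (huz : cs.IsMinimalInCoset J (u * z)) : u = 1 := by
  have h := huz u⁻¹ (inv_mem hu)
  rw [inv_mul_cancel_left, hz.length_mul hu] at h
  exact cs.length_eq_zero_iff.mp (by omega)

theorem IsMinimalInCoset.mul_simple_of_isRightDescent {z : W} (hz : cs.IsMinimalInCoset J z)
    {i : B} (hi : cs.IsRightDescent z i) : cs.IsMinimalInCoset J (z * s i) := by
  intro u hu
  have := hz u hu
  have := cs.length_mul_simple (u * z) i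
  unfold IsRightDescent at hi
  rw [← mul_assoc]
  omega

/-- Deodhar's lemma. -/
theorem IsMinimalInCoset.exists_mul_simple_eq {z : W} (hz : cs.IsMinimalInCoset J z) {i : B}
    (hzi : ¬ cs.IsMinimalInCoset J (z * s i)) :
    ∃ j ∈ J, z * s i = s j * z ∧ ℓ (z * s i) = ℓ z + 1 := by
  have hup : ℓ (z * s i) = ℓ z + 1 :=
    (cs.length_mul_simple z i).resolve_right fun h =>
      hzi (hz.mul_simple_of_isRightDescent (show ℓ (z * s i) < ℓ z by omega))
  obtain ⟨u, hu, hlt⟩ : ∃ u ∈ cs.parabolic J, ℓ (u * (z * s i)) < ℓ (z * s i) := by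
    simpa [IsMinimalInCoset] using hzi
  have huz := hz.length_mul hu
  have huzi := cs.length_mul_simple (u * z) i
  have hu1 : ℓ u = 1 := by
    have : ℓ u ≠ 0 := fun h0 => by
      rw [cs.length_eq_zero_iff.mp h0, one_mul] at hlt
      exact lt_irrefl _ hlt
    rw [← mul_assoc] at hlt
    omega
  obtain ⟨j, hj, rfl⟩ := exists_simple_of_mem_parabolic_of_length_eq_one hu hu1
  refine ⟨j, hj, ?_, hup⟩
  obtain ⟨ζ, hζ, rfl⟩ := cs.exists_isReduced z
  have hζi : cs.IsReduced (ζ ++ [i]) := by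
    unfold IsReduced at hζ ⊢
    rw [wordProd_append, wordProd_singleton, hup, hζ, length_append, length_singleton]
  rcases cs.isLeftDescent_or_exists_eraseIdx_of_append hζi
    (show ℓ (s j * (π ζ * π [i])) < ℓ (π ζ * π [i]) by rwa [wordProd_singleton]) with
    hjdesc | ⟨k, hk, hkj⟩
  · unfold IsLeftDescent at hjdesc
    rw [length_simple] at huz
    omega
  · obtain rfl : k = 0 := by simpa using hk
    rw [wordProd_singleton, eraseIdx_cons_zero, wordProd_nil, mul_one] at hkj
    calc π ζ * s i = s j * π ζ * s i * s i := by rw [hkj]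
      _ = s j * π ζ := simple_mul_simple_cancel_right cs i

variable (cs J) in
structure IsMinCosetRep (mcr : W → W) : Prop where
  mem_coset : ∀ w, ∃ u ∈ cs.parabolic J, mcr w = u * w
  length_le : ∀ w y, (∃ u ∈ cs.parabolic J, y = u * w) → ℓ (mcr w) ≤ ℓ y

namespace IsMinCosetRep

variable {mcr : W → W}

theorem isMinimalInCoset (h : cs.IsMinCosetRep J mcr) (w : W) :
    cs.IsMinimalInCoset J (mcr w) := by
  intro u hu
  obtain ⟨u₀, hu₀, hw⟩ := h.mem_coset w
  exact h.length_le w _ ⟨u * u₀, mul_mem hu hu₀, by rw [hw, mul_assoc]⟩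

theorem eq_self_iff (h : cs.IsMinCosetRep J mcr) (z : W) :
    mcr z = z ↔ cs.IsMinimalInCoset J z := by
  refine ⟨fun hz => hz ▸ h.isMinimalInCoset z, fun hz => ?_⟩
  obtain ⟨u, hu, hzu⟩ := h.mem_coset z
  rw [hzu, hz.eq_one_of_mul hu (hzu ▸ h.isMinimalInCoset z), one_mul]

theorem map_mul_left (h : cs.IsMinCosetRep J mcr) {v : W} (hv : v ∈ cs.parabolic J) (w : W) :
    mcr (v * w) = mcr w := by
  obtain ⟨u₁, hu₁, hvw⟩ := h.mem_coset (v * w)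
  obtain ⟨u₂, hu₂, hw⟩ := h.mem_coset w
  have hmem : u₁ * v * u₂⁻¹ ∈ cs.parabolic J := mul_mem (mul_mem hu₁ hv) (inv_mem hu₂)
  have hvw' : mcr (v * w) = u₁ * v * u₂⁻¹ * mcr w := by rw [hvw, hw]; group
  rw [hvw', (h.isMinimalInCoset w).eq_one_of_mul hmem (hvw' ▸ h.isMinimalInCoset _), one_mul]

theorem map_idem (h : cs.IsMinCosetRep J mcr) (w : W) : mcr (mcr w) = mcr w :=
  (h.eq_self_iff _).mpr (h.isMinimalInCoset w)

theorem map_one (h : cs.IsMinCosetRep J mcr) : mcr 1 = 1 :=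
  (h.eq_self_iff 1).mpr fun u _ => by simp

end IsMinCosetRep

end CoxeterSystem

theorem Fintype.sum_fun_fin_succ {α A : Type*} [Fintype α] [AddCommMonoid A] {n : ℕ}
    (F : (Fin (n + 1) → α) → A) :
    ∑ e : Fin (n + 1) → α, F e = ∑ a : α, ∑ e : Fin n → α, F (Fin.cons a e) := by
  rw [← (Fin.consEquiv fun _ => α).sum_comp F, Fintype.sum_prod_type]
  rfl

namespace CoxeterSystem

variable {B W : Type} [Group W] {M : CoxeterMatrix B} {cs : CoxeterSystem M W}
  {H : Type*} [Ring H] [Algebra (LaurentPolynomial ℤ) H]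

theorem hecke_mul_simple_of_isRightDescent (δ : W → H)
    (hmul : ∀ u w : W, cs.length (u * w) = cs.length u + cs.length w → δ u * δ w = δ (u * w))
    (hquad : ∀ i : B, δ (cs.simple i) * δ (cs.simple i)
        = 1 + ((T (-1) - T 1 : LaurentPolynomial ℤ)) • δ (cs.simple i))
    {z : W} {i : B} (hi : cs.IsRightDescent z i) :
    δ z * δ (cs.simple i)
      = δ (z * cs.simple i) + (T (-1) - T 1 : LaurentPolynomial ℤ) • δ z := by
  have hlen := cs.length_mul_simple z i
  unfold IsRightDescent at hi
  have hz : δ (z * cs.simple i) * δ (cs.simple i) = δ z := by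
    rw [hmul _ _ (by rw [length_simple, simple_mul_simple_cancel_right]; omega),
      simple_mul_simple_cancel_right]
  rw [← hz, mul_assoc, hquad, mul_add, mul_one, mul_smul_comm]

theorem sdefAux_cons (mcr : W → W) (z : W) (p : B × Bool) (l : List (B × Bool)) :
    sdefAux cs mcr z (p :: l)
      = sdefAux cs mcr z [p] + sdefAux cs mcr (if p.2 then mcr (z * cs.simple p.1) else z) l := by
  simp [sdefAux]

variable {MM : Type*} [AddCommGroup MM] [Module (LaurentPolynomial ℤ) MM]
  [Module Hᵐᵒᵖ MM] [IsScalarTower (LaurentPolynomial ℤ) Hᵐᵒᵖ MM]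
  {J : Set B} {mcr : W → W}

theorem op_mul_simple_add_smul_eq (hrep : cs.IsMinCosetRep J mcr) (δ : W → H)
    (hmul : ∀ u w : W, cs.length (u * w) = cs.length u + cs.length w → δ u * δ w = δ (u * w))
    (hquad : ∀ i : B, δ (cs.simple i) * δ (cs.simple i)
        = 1 + ((T (-1) - T 1 : LaurentPolynomial ℤ)) • δ (cs.simple i))
    (m1 : MM)
    (hsph : ∀ j ∈ J, op (δ (cs.simple j)) • m1 = (T (-1) : LaurentPolynomial ℤ) • m1)
    {z : W} (hz : mcr z = z) (i : B) :
    op (δ z * (δ (cs.simple i) + (T 1 : LaurentPolynomial ℤ) • (1 : H))) • m1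
      = (T (sdefAux cs mcr z [(i, true)]) : LaurentPolynomial ℤ)
            • op (δ (mcr (z * cs.simple i))) • m1
        + (T (sdefAux cs mcr z [(i, false)]) : LaurentPolynomial ℤ) • op (δ z) • m1 := by
  rw [mul_add, mul_smul_comm, mul_one, op_add, add_smul, op_smul, smul_assoc]
  by_cases hX : mcr (z * cs.simple i) = z * cs.simple i
  · rw [hX]
    rcases cs.length_mul_simple z i with hup | hdown
    · rw [hmul _ _ (by rw [hup, length_simple])]
      simp [sdefAux, hX, hup]
    · rw [hecke_mul_simple_of_isRightDescent δ hmul hquad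
        (show cs.length (z * cs.simple i) < cs.length z by omega)]
      simp only [sdefAux, hX, show ¬ cs.length z < cs.length (z * cs.simple i) by omega]
      simp [add_smul, sub_smul, smul_assoc, add_assoc]
  · obtain ⟨j, hj, hzi, hup⟩ :=
      ((hrep.eq_self_iff z).mp hz).exists_mul_simple_eq (mt (hrep.eq_self_iff _).mpr hX)
    have hcomm : δ z * δ (cs.simple i) = δ (cs.simple j) * δ z := by
      rw [hmul _ _ (by rw [hup, length_simple]), hzi,
        ← hmul _ _ (by rw [← hzi, hup, length_simple, add_comm])]
    rw [hcomm, op_mul, mul_smul, hsph j hj, smul_comm, hzi,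
      hrep.map_mul_left (simple_mem_parabolic hj), hz]
    simp [sdefAux, hX]

theorem op_prod_smul_eq_sum_sdefAux (hrep : cs.IsMinCosetRep J mcr) (δ : W → H)
    (hmul : ∀ u w : W, cs.length (u * w) = cs.length u + cs.length w → δ u * δ w = δ (u * w))
    (hquad : ∀ i : B, δ (cs.simple i) * δ (cs.simple i)
        = 1 + ((T (-1) - T 1 : LaurentPolynomial ℤ)) • δ (cs.simple i))
    (m1 : MM)
    (hsph : ∀ j ∈ J, op (δ (cs.simple j)) • m1 = (T (-1) : LaurentPolynomial ℤ) • m1)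
    (xs : List B) {z : W} (hz : mcr z = z) :
    op (xs.map fun i => δ (cs.simple i) + (T 1 : LaurentPolynomial ℤ) • (1 : H)).prod
        • op (δ z) • m1
      = ∑ e : Fin xs.length → Bool,
          (T (sdefAux cs mcr z (xs.zip (List.ofFn e))) : LaurentPolynomial ℤ)
            • op (δ (mcr (z * cs.wordProd (subletters (xs.zip (List.ofFn e)))))) • m1 := by
  induction xs generalizing z with
  | nil => simp [sdefAux, subletters, hz]
  | cons i xs ih =>
    rw [List.map_cons, List.prod_cons, op_mul, mul_smul,
      ← mul_smul (op (δ (cs.simple i) + (T 1 : LaurentPolynomial ℤ) • (1 : H))), ← op_mul,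
      op_mul_simple_add_smul_eq hrep δ hmul hquad m1 hsph hz, smul_add,
      smul_comm (op (List.map _ xs).prod) (T _ : LaurentPolynomial ℤ),
      smul_comm (op (List.map _ xs).prod) (T _ : LaurentPolynomial ℤ),
      ih (hrep.map_idem _), ih hz, Finset.smul_sum, Finset.smul_sum]
    refine Eq.trans ?_ (Fintype.sum_fun_fin_succ _).symm
    rw [Fintype.sum_bool]
    congr 1 <;> refine Finset.sum_congr rfl fun e _ => ?_ <;>
      rw [smul_smul, ← T_add, List.ofFn_cons, List.zip_cons_cons,
        sdefAux_cons _ _ _ (xs.zip (List.ofFn e))]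
    · obtain ⟨u, hu, hzi⟩ := hrep.mem_coset (z * cs.simple i)
      rw [if_pos rfl, hzi, show subletters ((i, true) :: xs.zip (List.ofFn e))
          = i :: subletters (xs.zip (List.ofFn e)) from rfl,
        wordProd_cons, mul_assoc u, hrep.map_mul_left hu, mul_assoc]
    · rfl

end CoxeterSystem

/-- In the spherical module M(J) with the bilinear form ⟨·,·⟩_M making the
standard basis {m_z : z ∈ ᴶW} orthonormal, for any expressions x̲, y̲:
⟨1⊗b_{x̲}, 1⊗b_{y̲}⟩_M = Σ v^{sdef(e̲)+sdef(f̲)}, summed over pairs of subexpressions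
e̲ ⊆ x̲, f̲ ⊆ y̲ with W_J·x̲^{e̲} = W_J·y̲^{f̲}. -/
theorem stmt_12 {B W : Type} [Group W] {M : CoxeterMatrix B} (cs : CoxeterSystem M W)
    (J : Set B) (WJ : Subgroup W) (hWJ : WJ = Subgroup.closure (cs.simple '' J))
    (mcr : W → W)
    (hmcr1 : ∀ w : W, ∃ u ∈ WJ, mcr w = u * w)
    (hmcr2 : ∀ w y : W, (∃ u ∈ WJ, y = u * w) → cs.length (mcr w) ≤ cs.length y)
    (H : Type) [Ring H] [Algebra (LaurentPolynomial ℤ) H]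
    (δ : Module.Basis W (LaurentPolynomial ℤ) H) (hδ1 : δ 1 = 1)
    (hmul : ∀ u w : W, cs.length (u * w) = cs.length u + cs.length w →
        δ u * δ w = δ (u * w))
    (hquad : ∀ i : B, δ (cs.simple i) * δ (cs.simple i)
        = 1 + ((T (-1) - T 1 : LaurentPolynomial ℤ)) • δ (cs.simple i))
    (MM : Type) [AddCommGroup MM] [Module (LaurentPolynomial ℤ) MM]
    [Module Hᵐᵒᵖ MM] [IsScalarTower (LaurentPolynomial ℤ) Hᵐᵒᵖ MM]
    (m1 : MM)
    (hsph : ∀ j ∈ J, op (δ (cs.simple j)) • m1 = (T (-1) : LaurentPolynomial ℤ) • m1)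
    (form : MM →ₗ[LaurentPolynomial ℤ] MM →ₗ[LaurentPolynomial ℤ] LaurentPolynomial ℤ)
    (horth : ∀ x y : W, mcr x = x → mcr y = y →
        form (op (δ x) • m1) (op (δ y) • m1) = if x = y then 1 else 0) :
    ∀ xs ys : List B,
      form
        (op (xs.map fun i => δ (cs.simple i) + (T 1 : LaurentPolynomial ℤ) • (1 : H)).prod • m1)
        (op (ys.map fun i => δ (cs.simple i) + (T 1 : LaurentPolynomial ℤ) • (1 : H)).prod • m1)
      = ∑ e : Fin xs.length → Bool, ∑ f : Fin ys.length → Bool,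
          if mcr (cs.wordProd (subletters (xs.zip (List.ofFn e))))
              = mcr (cs.wordProd (subletters (ys.zip (List.ofFn f)))) then
            (T (sdefAux cs mcr 1 (xs.zip (List.ofFn e))
                + sdefAux cs mcr 1 (ys.zip (List.ofFn f))) : LaurentPolynomial ℤ)
          else 0 := by
  intro xs ys
  subst hWJ
  have hrep : cs.IsMinCosetRep J mcr := ⟨hmcr1, hmcr2⟩
  have hexpand (zs : List B) :=
    cs.op_prod_smul_eq_sum_sdefAux hrep δ hmul hquad m1 hsph zs hrep.map_one
  simp only [one_mul, hδ1, op_one, one_smul] at hexpand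
  simp only [hexpand, map_sum, map_smul, LinearMap.sum_apply, LinearMap.smul_apply,
    Finset.smul_sum, horth _ _ (hrep.map_idem _) (hrep.map_idem _)]
  rw [Finset.sum_comm]
  refine Finset.sum_congr rfl fun e _ => Finset.sum_congr rfl fun f _ => ?_
  split_ifs
  · rw [smul_eq_mul, smul_eq_mul, mul_one, ← T_add, add_comm]
  · rw [smul_zero, smul_zero]
end
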